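/- Let R be a noetherian commutative ring satisfying conditions (G₀) and (S₁), and let I be an ideal of R. Then the canonical homomorphism I** → R** = R is injective, so that the double dual I** may be identified with an ideal of R. -/

import Mathlib

section Defs2
variable (R : Type*) [CommRing R]

/-- `DepthGE A n` : the local ring `A` has depth at least `n`, i.e. there is a regular
sequence of length `n` contained in the maximal ideal. -/
def DepthGE (A : Type*) [CommRing A] [IsLocalRing A] (n : ℕ) : Prop :=
  ∃ rs : List A, rs.length = n ∧ (∀ r ∈ rs, r ∈ IsLocalRing.maximalIdeal A) ∧
    RingTheory.Sequence.IsRegular A rs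

/-- The height of a prime ideal. -/
noncomputable def primeHt (𝔯 : Ideal R) (h : 𝔯.IsPrime) : ℕ∞ :=
  Order.height (⟨𝔯, h⟩ : PrimeSpectrum R)

/-- Condition (G₀): the localization of `R` at every prime of height `0` is Gorenstein
(for a zero-dimensional local ring, Gorenstein means self-injective). -/
def CondG0 : Prop :=
  ∀ (𝔯 : Ideal R) (h : 𝔯.IsPrime), primeHt R 𝔯 h ≤ 0 →
    Module.Injective (Localization.AtPrime 𝔯) (Localization.AtPrime 𝔯)

/-- Serre's condition (Sₙ): `depth R_𝔯 ≥ min {n, ht 𝔯}` for every prime `𝔯`. -/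
def CondS (n : ℕ) : Prop :=
  ∀ (𝔯 : Ideal R) (h : 𝔯.IsPrime) (m : ℕ),
    (m : ℕ∞) ≤ min (n : ℕ∞) (primeHt R 𝔯 h) → DepthGE (Localization.AtPrime 𝔯) m

/-- The canonical map `I** → R** = R` for an ideal `I ⊆ R`. -/
noncomputable def bidualToRing (I : Ideal R) :
    Module.Dual R (Module.Dual R I) →ₗ[R] R where
  toFun φ := φ ((Submodule.subtype I).dualMap (LinearMap.id : R →ₗ[R] R))
  map_add' := by intros; rfl
  map_smul' := by intros; rfl
end Defs2
/-!
Let `φ ∈ I**` vanish on the inclusion `ι : I → R` and suppose `φ g ≠ 0`. Pick an associated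
prime `P` of `R` containing `ann (φ g)`. Its maximal ideal being associated, `R_P` has depth `0`,
so (S₁) gives `ht P = 0` and (G₀) makes `R_P` self-injective. Then `g_P` extends along `ι_P` to
`R_P`, i.e. `u • g = r • ι` for some `u ∉ P`, whence `u • φ g = r • φ ι = 0` and `u ∈ P`.
-/

open IsLocalRing

theorem exists_smul_eq_smul_of_injective_localization {R : Type*} [CommRing R]
    (S : Submonoid R) [Module.Injective (Localization S) (Localization S)]
    {M : Type*} [AddCommGroup M] [Module R M] [Module.Finite R M]
    {ι : M →ₗ[R] R} (hι : Function.Injective ι) (g : M →ₗ[R] R) :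
    ∃ u ∈ S, ∃ r : R, u • g = r • ι := by
  let fM := LocalizedModule.mkLinearMap S M
  let fR := Algebra.linearMap R (Localization S)
  let ιₛ := IsLocalizedModule.map S fM fR ι
  obtain ⟨h, hh⟩ := (Module.Baer.of_injective ‹_›).extension_property
    (ιₛ.extendScalarsOfIsLocalization S _) (IsLocalizedModule.map_injective S fM fR ι hι)
    ((IsLocalizedModule.map S fM fR g).extendScalarsOfIsLocalization S _)
  obtain ⟨r, s, hrs⟩ := IsLocalization.exists_mk'_eq S (h 1)
  have h_eq_mul (c : Localization S) : h c = c * h 1 := by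
    rw [← smul_eq_mul, ← map_smul, smul_eq_mul, mul_one]
  have hcomp : fR ∘ₗ ((s : R) • g) = fR ∘ₗ (r • ι) := by
    ext x
    have hx := LinearMap.congr_fun hh (fM x)
    simp only [LinearMap.coe_comp, Function.comp_apply,
      LinearMap.extendScalarsOfIsLocalization_apply', ιₛ, IsLocalizedModule.map_apply] at hx
    rw [h_eq_mul, ← hrs] at hx
    simp only [fR, LinearMap.comp_apply, LinearMap.smul_apply, smul_eq_mul,
      Algebra.linearMap_apply, map_mul] at hx ⊢
    rw [← hx, ← IsLocalization.mk'_spec' (Localization S) r s]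
    ring
  -- `r / s` is what `g` becomes on `S⁻¹M`; finiteness of `M` clears the denominators globally
  obtain ⟨t, ht⟩ := Module.Finite.exists_smul_of_comp_eq_of_isLocalizedModule S fR _ _ hcomp
  refine ⟨t * s, S.mul_mem t.2 s.2, t * r, ?_⟩
  simpa only [Submonoid.coe_mul, mul_smul, Submonoid.smul_def] using ht

theorem not_depthGE_one_of_maximalIdeal_mem_associatedPrimes {A : Type*} [CommRing A]
    [IsLocalRing A] [IsNoetherianRing A] (h : maximalIdeal A ∈ associatedPrimes A A) :
    ¬ DepthGE A 1 := by
  rintro ⟨rs, hlen, hmem, hreg⟩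
  obtain ⟨r, rfl⟩ := List.length_eq_one_iff.mp hlen
  have hr : r ∈ ⋃ p ∈ associatedPrimes A A, (p : Set A) :=
    Set.mem_biUnion h (hmem r (List.mem_singleton_self r))
  rw [biUnion_associatedPrimes_eq_compl_regular] at hr
  exact hr ((RingTheory.Sequence.isWeaklyRegular_singleton_iff A r).mp hreg.toIsWeaklyRegular)

theorem maximalIdeal_mem_associatedPrimes_atPrime {R : Type*} [CommRing R] {P : Ideal R}
    [P.IsPrime] (hP : P ∈ associatedPrimes R R) :
    maximalIdeal (Localization.AtPrime P) ∈
      associatedPrimes (Localization.AtPrime P) (Localization.AtPrime P) :=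
  Module.associatedPrimes.mem_associatedPrimes_of_comap_mem_associatedPrimes_of_isLocalizedModule
    P.primeCompl (Algebra.linearMap R (Localization.AtPrime P)) _
    (by simpa [Localization.AtPrime.under_maximalIdeal] using hP)

theorem primeHt_le_zero_of_mem_associatedPrimes {R : Type*} [CommRing R] [IsNoetherianRing R]
    (hS : CondS R 1) {P : Ideal R} (hP : P ∈ associatedPrimes R R) :
    primeHt R P hP.isPrime ≤ 0 := by
  have := hP.isPrime
  by_contra hpos
  refine not_depthGE_one_of_maximalIdeal_mem_associatedPrimes
    (maximalIdeal_mem_associatedPrimes_atPrime hP) (hS P _ 1 ?_)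
  simpa [Order.one_le_iff_ne_zero] using hpos

/-- If a noetherian ring satisfies (G₀) and (S₁), then for any ideal `I` the canonical map
`I** → R** = R` is injective. -/
theorem bidualToRing_injective (R : Type*) [CommRing R] [IsNoetherianRing R]
    (hG : CondG0 R) (hS : CondS R 1) (I : Ideal R) :
    Function.Injective (bidualToRing R I) := by
  refine (injective_iff_map_eq_zero _).mpr fun φ hφ ↦ LinearMap.ext fun g ↦ ?_
  by_contra hg
  obtain ⟨P, hP, hle⟩ := exists_le_isAssociatedPrime_of_isNoetherianRing R (φ g) hg
  have := hP.isPrime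
  have := hG P _ (primeHt_le_zero_of_mem_associatedPrimes hS hP)
  obtain ⟨u, hu, r, hur⟩ :=
    exists_smul_eq_smul_of_injective_localization P.primeCompl I.injective_subtype g
  have hφι : φ I.subtype = 0 := hφ
  refine hu (hle ?_)
  rw [Submodule.mem_colon_singleton, Submodule.mem_bot, ← map_smul, hur, map_smul, hφι,
    smul_zero]
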